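/- arXiv:2409.05608 — 8 statements merged into one kernel-verified Lean document; each statement's English description precedes it below -/
import Mathlib

section
/- In a finite two-player game where the leader has action set A_L and the follower has action set A_F with utility u_F: A_L × A_F → ℝ, if the leader commits to a compact convex set P_L ⊆ Δ(A_L), then there exists d ∈ P_L and a follower mixed strategy p_F ∈ Δ(A_F) such that p_F is a maximin best response to P_L (i.e., p_F maximizes min_{p_L ∈ P_L} E[u_F]) and p_F is a best response to d in the ordinary sense. -/
/-- Expected utility when leader mixes with `p` and follower mixes with `q`. -/
noncomputable def Eu {L F : Type} [Fintype L] [Fintype F]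
    (u : L → F → ℝ) (p : L → ℝ) (q : F → ℝ) : ℝ :=
  ∑ a : L, ∑ b : F, p a * q b * u a b

/-- Worst-case expected utility of follower strategy `q` against the commitment set `P`. -/
noncomputable def worst {L F : Type} [Fintype L] [Fintype F]
    (u : L → F → ℝ) (P : Set (L → ℝ)) (q : F → ℝ) : ℝ :=
  sInf ((fun p => Eu u p q) '' P)

/-- If the leader commits to a compact convex nonempty `P ⊆ Δ(A_L)`, there is `d ∈ P`
and a follower mixed strategy `q` that is a maximin best response to `P` and also an
ordinary best response to `d`. -/
theorem stmt0 {L F : Type} [Fintype L] [Fintype F] [Nonempty L] [Nonempty F]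
    (u : L → F → ℝ) (P : Set (L → ℝ))
    (hPs : P ⊆ stdSimplex ℝ L) (hPc : IsCompact P) (hPx : Convex ℝ P)
    (hPn : P.Nonempty) :
    ∃ d ∈ P, ∃ q ∈ stdSimplex ℝ F,
      (∀ q' ∈ stdSimplex ℝ F, worst u P q' ≤ worst u P q) ∧
      (∀ q' ∈ stdSimplex ℝ F, Eu u d q' ≤ Eu u d q) := by
  classical
  -- the payoff-vector linear map
  set g : (L → ℝ) →ₗ[ℝ] (F → ℝ) :=
    { toFun := fun p b => ∑ a, p a * u a b
      map_add' := by
        intro p p'; funext b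
        simp [add_mul, Finset.sum_add_distrib]
      map_smul' := by
        intro c p; funext b
        simp [Finset.mul_sum, mul_assoc] } with hg
  have hgapp : ∀ p b, g p b = ∑ a, p a * u a b := fun p b => rfl
  have hEu : ∀ p q, Eu u p q = ∑ b, q b * g p b := by
    intro p q
    rw [Eu, Finset.sum_comm]
    refine Finset.sum_congr rfl fun b _ => ?_
    rw [hgapp, Finset.mul_sum]
    refine Finset.sum_congr rfl fun a _ => by ring
  have hgcont : Continuous g := g.continuous_of_finiteDimensional
  have hgbcont : ∀ b : F, Continuous fun p => g p b :=
    fun b => (continuous_apply b).comp hgcont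
  have hEucont : ∀ q, Continuous fun p => Eu u p q := by
    intro q
    have : Continuous fun p => ∑ b, q b * g p b :=
      continuous_finset_sum _ fun b _ => continuous_const.mul (hgbcont b)
    simpa only [← hEu] using this
  have hFne : (Finset.univ : Finset F).Nonempty := Finset.univ_nonempty
  -- the "best case for the leader" value function
  set m : (L → ℝ) → ℝ := fun p => Finset.univ.sup' hFne (fun b => g p b) with hm
  have hmcont : Continuous m :=
    Continuous.finset_sup'_apply hFne fun b _ => hgbcont b
  obtain ⟨d, hdP, hdmin⟩ := hPc.exists_isMinOn hPn hmcont.continuousOn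
  set v : ℝ := m d with hv
  -- the open convex set of vectors strictly dominated by v
  set A : Set (F → ℝ) := ⋂ b : F, (LinearMap.proj b : (F → ℝ) →ₗ[ℝ] ℝ) ⁻¹' Set.Iio v
    with hA
  have hAmem : ∀ x : F → ℝ, x ∈ A ↔ ∀ b, x b < v := by
    intro x; simp [hA]
  have hAconv : Convex ℝ A :=
    convex_iInter fun b => (convex_Iio v).linear_preimage _
  have hAopen : IsOpen A :=
    isOpen_iInter_of_finite fun b =>
      (isOpen_Iio).preimage (continuous_apply b)
  have hBconv : Convex ℝ (g '' P) := hPx.linear_image g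
  have hdisj : Disjoint A (g '' P) := by
    rw [Set.disjoint_left]
    rintro x hx ⟨p, hpP, rfl⟩
    have h1 : m p < v :=
      (Finset.sup'_lt_iff hFne).mpr fun b _ => (hAmem _).1 hx b
    exact absurd (hdmin hpP) (not_le.mpr h1)
  obtain ⟨f, s, hfA, hfB⟩ := geometric_hahn_banach_open hAconv hAopen hBconv hdisj
  set lam : F → ℝ := fun b => f (Pi.single b 1) with hlam
  have hfx : ∀ x : F → ℝ, f x = ∑ b, x b * lam b := by
    intro x
    have hx : x = ∑ b, x b • (Pi.single b 1 : F → ℝ) := by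
      funext c
      simp [Finset.sum_apply, Pi.single_apply]
    conv_lhs => rw [hx]
    rw [map_sum]
    exact Finset.sum_congr rfl fun b _ => by rw [map_smul]; simp [hlam, smul_eq_mul]
  have hconstA : ∀ ε : ℝ, 0 < ε → (fun _ : F => v - ε) ∈ A := by
    intro ε hε
    rw [hAmem]; intro b; linarith
  -- lam is nonnegative
  have hlamnn : ∀ b, 0 ≤ lam b := by
    intro b0
    by_contra hneg
    push_neg at hneg
    have hfc : f (fun _ : F => v - 1) < s := hfA _ (hconstA 1 one_pos)
    obtain ⟨t, ht⟩ : ∃ t : ℝ, t = (s - f (fun _ : F => v - 1)) / (-lam b0) + 1 :=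
      ⟨_, rfl⟩
    have ht0 : 0 < t := by
      have hd : 0 < (s - f (fun _ : F => v - 1)) / (-lam b0) :=
        div_pos (by linarith) (by linarith)
      linarith
    have hmemA : (fun _ : F => v - 1) - t • (Pi.single b0 1 : F → ℝ) ∈ A := by
      rw [hAmem]
      intro b
      by_cases hb : b = b0
      · subst hb
        simp only [Pi.sub_apply, Pi.smul_apply, Pi.single_eq_same, smul_eq_mul, mul_one]
        nlinarith
      · simp only [Pi.sub_apply, Pi.smul_apply, Pi.single_apply, if_neg hb, smul_eq_mul,
          mul_zero, sub_zero]
        linarith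
    have hlt := hfA _ hmemA
    rw [map_sub, map_smul, smul_eq_mul] at hlt
    have h2 : t * (-lam b0) = (s - f (fun _ : F => v - 1)) + (-lam b0) := by
      have hne : (-lam b0) ≠ 0 := by intro h; apply absurd hneg; simp [neg_eq_zero.mp h]
      rw [ht, add_mul, div_mul_cancel₀ _ hne, one_mul]
    nlinarith
  -- the total mass of lam is positive
  have hlamsum : 0 < ∑ b, lam b := by
    rcases (Finset.sum_nonneg fun b _ => hlamnn b).lt_or_eq with h | h
    · exact h
    · exfalso
      have hz : ∀ b, lam b = 0 := by
        intro b
        have := (Finset.sum_eq_zero_iff_of_nonneg fun b _ => hlamnn b).mp h.symm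
        exact this b (Finset.mem_univ b)
      have hf0 : ∀ x : F → ℝ, f x = 0 := by
        intro x; rw [hfx]; simp [hz]
      obtain ⟨p0, hp0⟩ := hPn
      have h1 : (0:ℝ) < s := by
        have := hfA _ (hconstA 1 one_pos); rwa [hf0] at this
      have h2 : s ≤ 0 := by
        have := hfB _ ⟨p0, hp0, rfl⟩; rwa [hf0] at this
      linarith
  set q : F → ℝ := fun b => lam b / ∑ c, lam c with hq
  have hqstd : q ∈ stdSimplex ℝ F := by
    constructor
    · intro b; exact div_nonneg (hlamnn b) hlamsum.le
    · rw [← Finset.sum_div, div_self hlamsum.ne']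
  -- s is at least v * total mass
  have hsv : v * ∑ b, lam b ≤ s := by
    by_contra hcon
    push_neg at hcon
    obtain ⟨ε, hε⟩ : ∃ ε : ℝ, ε = (v * ∑ b, lam b - s) / (2 * ∑ b, lam b) := ⟨_, rfl⟩
    have hε0 : 0 < ε := by rw [hε]; exact div_pos (by linarith) (by linarith)
    have h : (v - ε) * ∑ b, lam b < s := by
      have h0 := hfA _ (hconstA ε hε0)
      rw [hfx] at h0
      rw [Finset.mul_sum]
      simpa using h0
    have hεs : ε * ∑ b, lam b = (v * ∑ b, lam b - s) / 2 := by
      rw [hε]; field_simp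
    nlinarith
  -- key inequality : every element of P gives q at least v
  have hkey : ∀ p ∈ P, v ≤ Eu u p q := by
    intro p hp
    have h1 : s ≤ f (g p) := hfB _ ⟨p, hp, rfl⟩
    rw [hfx] at h1
    have h2 : Eu u p q = (∑ b, g p b * lam b) / ∑ c, lam c := by
      rw [hEu, Finset.sum_div]
      refine Finset.sum_congr rfl fun b _ => ?_
      rw [hq]; ring
    rw [h2, le_div_iff₀ hlamsum]
    calc v * ∑ c, lam c ≤ s := hsv
      _ ≤ ∑ b, g p b * lam b := h1
  -- any q' gives d at most v
  have hup : ∀ q' ∈ stdSimplex ℝ F, Eu u d q' ≤ v := by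
    intro q' hq'
    rw [hEu]
    calc ∑ b, q' b * g d b
        ≤ ∑ b, q' b * v := by
          refine Finset.sum_le_sum fun b _ => ?_
          exact mul_le_mul_of_nonneg_left
            (Finset.le_sup' (fun b => g d b) (Finset.mem_univ b)) (hq'.1 b)
      _ = v := by rw [← Finset.sum_mul, hq'.2, one_mul]
  have hbdd : ∀ q0 : F → ℝ, BddBelow ((fun p => Eu u p q0) '' P) :=
    fun q0 => (hPc.image (hEucont q0)).bddBelow
  have hworstq : v ≤ worst u P q :=
    le_csInf (hPn.image _) (by rintro x ⟨p, hp, rfl⟩; exact hkey p hp)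
  refine ⟨d, hdP, q, hqstd, ?_, ?_⟩
  · intro q' hq'
    calc worst u P q' ≤ Eu u d q' := csInf_le (hbdd q') ⟨d, hdP, rfl⟩
      _ ≤ v := hup q' hq'
      _ ≤ worst u P q := hworstq
  · intro q' hq'
    calc Eu u d q' ≤ v := hup q' hq'
      _ ≤ Eu u d q := hkey d hdP
end

section
/- Let P_L ⊆ Δ(A_L) be compact and convex, and let B ⊆ A_F be a subset of follower actions such that every p_L ∈ P_L has a pure best response in B. Then the follower's maximin value over Δ(A_F) against P_L equals the maximin value over Δ(B) against P_L; in particular there exists a maximin best response supported on B. -/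
/-- If every element of the compact convex set `P` has a pure best response inside `B ⊆ A_F`,
then the follower's maximin value over `Δ(A_F)` equals the maximin value over `Δ(B)`, and
some maximin best response is supported on `B`. -/
theorem stmt3 {L F : Type} [Fintype L] [Fintype F] [Nonempty L] [Nonempty F]
    (u : L → F → ℝ) (P : Set (L → ℝ)) (hPs : P ⊆ stdSimplex ℝ L)
    (hPc : IsCompact P) (hPx : Convex ℝ P) (hPn : P.Nonempty)
    (B : Set F)
    (hB : ∀ p ∈ P, ∃ b ∈ B, ∀ b' : F, ∑ a : L, p a * u a b' ≤ ∑ a : L, p a * u a b) :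
    sSup ((worst u P) '' stdSimplex ℝ F) =
      sSup ((worst u P) '' {q ∈ stdSimplex ℝ F | ∀ b ∉ B, q b = 0}) ∧
    ∃ q ∈ stdSimplex ℝ F, (∀ b ∉ B, q b = 0) ∧
      ∀ q' ∈ stdSimplex ℝ F, worst u P q' ≤ worst u P q := by
  classical
  set φ : (L → ℝ) → F → ℝ := fun p b => ∑ a : L, p a * u a b with hφ
  have hEu : ∀ p q, Eu u p q = ∑ b : F, q b * φ p b := by
    intro p q
    rw [Eu, Finset.sum_comm]
    refine Finset.sum_congr rfl fun b _ => ?_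
    rw [Finset.mul_sum]
    exact Finset.sum_congr rfl fun a _ => by ring
  obtain ⟨p₀, hp₀⟩ := id hPn
  obtain ⟨b₀, hb₀B, _⟩ := hB p₀ hp₀
  set T : Finset F := (Set.toFinite B).toFinset with hT
  have hmemT : ∀ b, b ∈ T ↔ b ∈ B := fun b => Set.Finite.mem_toFinset _
  have hTne : T.Nonempty := ⟨b₀, (hmemT b₀).2 hb₀B⟩
  have hφbcont : ∀ b : F, Continuous fun p : L → ℝ => φ p b := fun b =>
    continuous_finset_sum _ fun a _ => (continuous_apply a).mul continuous_const
  have hgcont : Continuous fun p : L → ℝ => T.sup' hTne (fun b => φ p b) :=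
    Continuous.finset_sup'_apply hTne fun b _ => hφbcont b
  obtain ⟨ps, hpsP, hpsmin⟩ := hPc.exists_isMinOn ⟨p₀, hp₀⟩ hgcont.continuousOn
  set g : (L → ℝ) → ℝ := fun p => T.sup' hTne (fun b => φ p b) with hg
  set w : ℝ := g ps with hw
  have hwle : ∀ p ∈ P, w ≤ g p := fun p hp => hpsmin hp
  have hgle : ∀ p ∈ P, ∀ b : F, φ p b ≤ g p := by
    intro p hp b
    obtain ⟨b₁, hb₁B, hbest⟩ := hB p hp
    refine le_trans (hbest b) ?_
    show φ p b₁ ≤ T.sup' hTne fun b => φ p b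
    exact Finset.le_sup' _ ((hmemT b₁).2 hb₁B)
  have hEucont : ∀ q, Continuous fun p => Eu u p q := by
    intro q
    have : (fun p => Eu u p q) = fun p => ∑ b : F, q b * φ p b := by
      funext p; exact hEu p q
    rw [this]
    exact continuous_finset_sum _ fun b _ => continuous_const.mul (hφbcont b)
  -- (A) every mixed strategy has worst ≤ w
  have hA : ∀ q ∈ stdSimplex ℝ F, worst u P q ≤ w := by
    intro q hq
    have h1 : worst u P q ≤ Eu u ps q :=
      csInf_le (hPc.image (hEucont q)).bddBelow ⟨ps, hpsP, rfl⟩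
    have h2 : Eu u ps q ≤ w := by
      rw [hEu]
      calc ∑ b : F, q b * φ ps b ≤ ∑ b : F, q b * w :=
            Finset.sum_le_sum fun b _ =>
              mul_le_mul_of_nonneg_left (hgle ps hpsP b) (hq.1 b)
        _ = w := by rw [← Finset.sum_mul, hq.2, one_mul]
    linarith
  -- (B) separation argument
  set C : Set (F → ℝ) := φ '' P with hC
  have hφcont : Continuous φ := continuous_pi fun b => hφbcont b
  have hCcvx : Convex ℝ C := by
    rintro x ⟨p1, hp1, rfl⟩ y ⟨p2, hp2, rfl⟩ a b ha hb hab
    refine ⟨a • p1 + b • p2, hPx hp1 hp2 ha hb hab, ?_⟩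
    funext c
    simp only [hφ, Pi.add_apply, Pi.smul_apply, smul_eq_mul, Finset.mul_sum,
      ← Finset.sum_add_distrib]
    exact Finset.sum_congr rfl fun x _ => by ring
  set O : Set (F → ℝ) := {x | ∀ b ∈ T, x b < w} with hO
  have hOeq : O = ⋂ b ∈ T, {x : F → ℝ | x b < w} := by
    ext x; simp [hO, Set.mem_iInter]
  have hOopen : IsOpen O := by
    rw [hOeq]
    exact isOpen_biInter_finset fun b _ => isOpen_lt (continuous_apply b) continuous_const
  have hOcvx : Convex ℝ O := by
    rw [hOeq]
    exact convex_iInter₂ fun b _ =>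
      convex_halfSpace_lt ⟨fun _ _ => rfl, fun _ _ => rfl⟩ w
  have hdisj : Disjoint O C := by
    rw [Set.disjoint_left]
    rintro x hxO ⟨p, hp, rfl⟩
    obtain ⟨b, hbT, hbe⟩ := Finset.exists_mem_eq_sup' hTne (fun b => φ p b)
    have h1 : w ≤ φ p b := by
      have h2 := hwle p hp
      have h3 : g p = φ p b := hbe
      linarith [h2, h3.le, h3.ge]
    exact absurd (hxO b hbT) (not_lt.2 h1)
  obtain ⟨f, u0, hfO, hfC⟩ := geometric_hahn_banach_open hOcvx hOopen hCcvx hdisj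
  set μ : F → ℝ := fun b => f (Pi.single b 1) with hμ
  have hfrepr : ∀ x : F → ℝ, f x = ∑ b : F, x b * μ b := by
    intro x
    have hx : x = ∑ b : F, x b • (Pi.single b 1 : F → ℝ) := by
      funext c
      simp [Finset.sum_apply, Pi.single_apply, mul_ite]
    conv_lhs => rw [hx]
    rw [map_sum]
    exact Finset.sum_congr rfl fun b _ => by rw [map_smul, smul_eq_mul]
  set x0 : F → ℝ := fun _ => w - 1 with hx0
  have hx0O : x0 ∈ O := fun b _ => by simp only [hx0]; linarith
  have hfx0 : f x0 < u0 := hfO _ hx0O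
  have hμ0 : ∀ b ∉ T, μ b = 0 := by
    intro b hb
    by_contra hne
    have hmem : ∀ t : ℝ, (x0 + t • (Pi.single b 1 : F → ℝ)) ∈ O := by
      intro t c hc
      have hcb : c ≠ b := fun h => hb (h ▸ hc)
      show (x0 + t • (Pi.single b 1 : F → ℝ)) c < w
      simp only [Pi.add_apply, Pi.smul_apply, smul_eq_mul, Pi.single_eq_of_ne hcb,
        mul_zero, add_zero]
      have hxc : x0 c = w - 1 := rfl
      rw [hxc]; linarith
    have hlt := hfO _ (hmem ((u0 - f x0) / μ b))
    have hμb : f (Pi.single b 1) = μ b := rfl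
    rw [map_add, map_smul, smul_eq_mul, hμb, div_mul_cancel₀ _ hne] at hlt
    linarith
  have hμnn : ∀ b, 0 ≤ μ b := by
    intro b
    by_cases hbT : b ∈ T
    · by_contra hneg
      push_neg at hneg
      have htneg : (u0 - f x0) / μ b < 0 :=
        div_neg_of_pos_of_neg (by linarith) hneg
      have hmem : (x0 + ((u0 - f x0) / μ b) • (Pi.single b 1 : F → ℝ)) ∈ O := by
        intro c hc
        show (x0 + ((u0 - f x0) / μ b) • (Pi.single b 1 : F → ℝ)) c < w
        have hxc : x0 c = w - 1 := rfl
        by_cases hcb : c = b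
        · subst hcb
          simp only [Pi.add_apply, Pi.smul_apply, smul_eq_mul, Pi.single_eq_same, mul_one]
          rw [hxc]; linarith
        · simp only [Pi.add_apply, Pi.smul_apply, smul_eq_mul, Pi.single_eq_of_ne hcb,
            mul_zero, add_zero]
          rw [hxc]; linarith
      have hlt := hfO _ hmem
      have hμb : f (Pi.single b 1) = μ b := rfl
      rw [map_add, map_smul, smul_eq_mul, hμb, div_mul_cancel₀ _ (ne_of_lt hneg)] at hlt
      linarith
    · exact le_of_eq (hμ0 b hbT).symm
  set s : ℝ := ∑ b : F, μ b with hs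
  have hsnn : 0 ≤ s := Finset.sum_nonneg fun b _ => hμnn b
  have hspos : 0 < s := by
    rcases lt_or_eq_of_le hsnn with h | h
    · exact h
    · exfalso
      have hall : ∀ b ∈ Finset.univ, μ b = 0 :=
        (Finset.sum_eq_zero_iff_of_nonneg fun b _ => hμnn b).1 h.symm
      have hf0 : ∀ x : F → ℝ, f x = 0 := by
        intro x
        rw [hfrepr]
        exact Finset.sum_eq_zero fun b _ => by rw [hall b (Finset.mem_univ b), mul_zero]
      have h1 := hfC _ ⟨p₀, hp₀, rfl⟩
      rw [hf0] at h1
      rw [hf0] at hfx0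
      linarith
  have hws : w * s ≤ u0 := by
    by_contra h
    push_neg at h
    set ε : ℝ := (w * s - u0) / s with hε
    have hεpos : 0 < ε := div_pos (by linarith) hspos
    have hmem : (fun _ : F => w - ε) ∈ O := fun c _ => by show w - ε < w; linarith
    have hlt := hfO _ hmem
    rw [hfrepr] at hlt
    have hsum : ∑ b : F, (w - ε) * μ b = (w - ε) * s := by rw [← Finset.mul_sum]
    have hεs : ε * s = w * s - u0 := div_mul_cancel₀ _ (ne_of_gt hspos)
    rw [hsum] at hlt
    nlinarith
  set qb : F → ℝ := fun b => μ b / s with hqb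
  have hqbS : qb ∈ stdSimplex ℝ F :=
    ⟨fun b => div_nonneg (hμnn b) hspos.le, by
      rw [hqb]; rw [← Finset.sum_div, ← hs, div_self (ne_of_gt hspos)]⟩
  have hqbB : ∀ b ∉ B, qb b = 0 := by
    intro b hb
    have : b ∉ T := fun h => hb ((hmemT b).1 h)
    simp [hqb, hμ0 b this]
  have hkey : ∀ p ∈ P, w ≤ Eu u p qb := by
    intro p hp
    have h1 : u0 ≤ f (φ p) := hfC _ ⟨p, hp, rfl⟩
    rw [hfrepr] at h1
    rw [hEu]
    have heq : ∑ b : F, qb b * φ p b = (∑ b : F, φ p b * μ b) / s := by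
      rw [Finset.sum_div]
      exact Finset.sum_congr rfl fun b _ => by rw [hqb]; ring
    rw [heq, le_div_iff₀ hspos]
    linarith
  have hwq : w ≤ worst u P qb :=
    le_csInf ⟨Eu u p₀ qb, ⟨p₀, hp₀, rfl⟩⟩ (by rintro x ⟨p, hp, rfl⟩; exact hkey p hp)
  have hwst : worst u P qb = w := le_antisymm (hA qb hqbS) hwq
  have hqbmem : qb ∈ {q ∈ stdSimplex ℝ F | ∀ b ∉ B, q b = 0} := ⟨hqbS, hqbB⟩
  have hbdd1 : BddAbove ((worst u P) '' stdSimplex ℝ F) :=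
    ⟨w, by rintro x ⟨q, hq, rfl⟩; exact hA q hq⟩
  have hbdd2 : BddAbove ((worst u P) '' {q ∈ stdSimplex ℝ F | ∀ b ∉ B, q b = 0}) :=
    ⟨w, by rintro x ⟨q, hq, rfl⟩; exact hA q hq.1⟩
  constructor
  · apply le_antisymm
    · refine csSup_le ⟨worst u P qb, Set.mem_image_of_mem _ hqbS⟩ ?_
      rintro x ⟨q, hq, rfl⟩
      calc worst u P q ≤ w := hA q hq
        _ = worst u P qb := hwst.symm
        _ ≤ _ := le_csSup hbdd2 (Set.mem_image_of_mem _ hqbmem)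
    · refine csSup_le ⟨worst u P qb, Set.mem_image_of_mem _ hqbmem⟩ ?_
      rintro x ⟨q, hq, rfl⟩
      exact le_csSup hbdd1 (Set.mem_image_of_mem _ hq.1)
  · exact ⟨qb, hqbS, hqbB, fun q' hq' => (hA q' hq').trans hwst.symm.le⟩
end

section
/- In a multi-follower Stackelberg game where each follower F plays a zero-sum game against the leader (leader minimizes the sum of follower utilities), the leader's optimal pessimistic ambiguous value W* satisfies ∑_F V*_F ≤ W* ≤ V*, where V*_F is the minimax value of the zero-sum game with follower F, and V* is the precise Stackelberg value of the combined game. -/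
section Aux

variable {L F : Type} [Fintype L] [Fintype F]

lemma sum_pq_eq_one {p : L → ℝ} {q : F → ℝ}
    (hp : p ∈ stdSimplex ℝ L) (hq : q ∈ stdSimplex ℝ F) :
    ∑ a : L, ∑ b : F, p a * q b = 1 := by
  rw [← Finset.sum_mul_sum, hp.2, hq.2, one_mul]

lemma Eu_le_of_le (u : L → F → ℝ) (M : ℝ) (hM : ∀ a b, u a b ≤ M)
    {p : L → ℝ} {q : F → ℝ} (hp : p ∈ stdSimplex ℝ L) (hq : q ∈ stdSimplex ℝ F) :
    Eu u p q ≤ M := by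
  have key : ∑ a : L, ∑ b : F, p a * q b * M = M := by
    calc ∑ a : L, ∑ b : F, p a * q b * M = (∑ a : L, ∑ b : F, p a * q b) * M := by
          rw [Finset.sum_mul]
          exact Finset.sum_congr rfl fun a _ => by rw [Finset.sum_mul]
      _ = M := by rw [sum_pq_eq_one hp hq, one_mul]
  calc Eu u p q ≤ ∑ a : L, ∑ b : F, p a * q b * M := by
        refine Finset.sum_le_sum fun a _ => Finset.sum_le_sum fun b _ => ?_
        exact mul_le_mul_of_nonneg_left (hM a b) (mul_nonneg (hp.1 a) (hq.1 b))
    _ = M := key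

lemma le_Eu_of_le (u : L → F → ℝ) (m : ℝ) (hm : ∀ a b, m ≤ u a b)
    {p : L → ℝ} {q : F → ℝ} (hp : p ∈ stdSimplex ℝ L) (hq : q ∈ stdSimplex ℝ F) :
    m ≤ Eu u p q := by
  have key : ∑ a : L, ∑ b : F, p a * q b * m = m := by
    calc ∑ a : L, ∑ b : F, p a * q b * m = (∑ a : L, ∑ b : F, p a * q b) * m := by
          rw [Finset.sum_mul]
          exact Finset.sum_congr rfl fun a _ => by rw [Finset.sum_mul]
      _ = m := by rw [sum_pq_eq_one hp hq, one_mul]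
  calc m = ∑ a : L, ∑ b : F, p a * q b * m := key.symm
    _ ≤ Eu u p q := by
        refine Finset.sum_le_sum fun a _ => Finset.sum_le_sum fun b _ => ?_
        exact mul_le_mul_of_nonneg_left (hm a b) (mul_nonneg (hp.1 a) (hq.1 b))

/-- the linear map `q ↦ (a ↦ ∑ b, q b * u a b)` -/
noncomputable def Umap (u : L → F → ℝ) : (F → ℝ) →ₗ[ℝ] (L → ℝ) where
  toFun q := fun a => ∑ b : F, q b * u a b
  map_add' x y := by
    funext a
    simp [add_mul, Finset.sum_add_distrib]
  map_smul' c x := by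
    funext a
    simp [Finset.mul_sum, mul_assoc]

lemma Eu_eq_Umap (u : L → F → ℝ) (p : L → ℝ) (q : F → ℝ) :
    Eu u p q = ∑ a : L, p a * Umap u q a := by
  unfold Eu Umap
  refine Finset.sum_congr rfl fun a _ => ?_
  simp only [LinearMap.coe_mk, AddHom.coe_mk]
  rw [Finset.mul_sum]
  exact Finset.sum_congr rfl fun b _ => by ring

lemma simplex_nonempty (ι : Type) [Fintype ι] [Nonempty ι] :
    (stdSimplex ℝ ι).Nonempty := by
  classical
  exact ⟨_, ite_eq_mem_stdSimplex ℝ (Classical.arbitrary ι)⟩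

end Aux

lemma minimax {L F : Type} [Fintype L] [Fintype F] [Nonempty L] [Nonempty F]
    (u : L → F → ℝ) (m M : ℝ) (hm : ∀ a b, m ≤ u a b) (hM : ∀ a b, u a b ≤ M) :
    ∃ q ∈ stdSimplex ℝ F, ∀ p ∈ stdSimplex ℝ L,
      sInf ((fun p => sSup ((fun q => Eu u p q) '' stdSimplex ℝ F)) '' stdSimplex ℝ L)
        ≤ Eu u p q := by
  classical
  set V : ℝ :=
    sInf ((fun p => sSup ((fun q => Eu u p q) '' stdSimplex ℝ F)) '' stdSimplex ℝ L) with hV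
  by_contra hcon
  push_neg at hcon
  have key : ∀ q ∈ stdSimplex ℝ F, ∃ a : L, Umap u q a < V := by
    intro q hq
    by_contra h
    push_neg at h
    obtain ⟨p, hp, hlt⟩ := hcon q hq
    have hge : V ≤ Eu u p q := by
      rw [Eu_eq_Umap]
      calc V = (∑ a : L, p a) * V := by rw [hp.2, one_mul]
        _ = ∑ a : L, p a * V := Finset.sum_mul _ _ _
        _ ≤ ∑ a : L, p a * Umap u q a :=
            Finset.sum_le_sum fun a _ => mul_le_mul_of_nonneg_left (h a) (hp.1 a)
    exact absurd hlt (not_lt.2 hge)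
  set K : Set (L → ℝ) := Umap u '' stdSimplex ℝ F with hK
  set C : Set (L → ℝ) := {x | ∀ a, V ≤ x a} with hC
  have hKconv : Convex ℝ K := (convex_stdSimplex ℝ F).linear_image (Umap u)
  have hKcomp : IsCompact K :=
    (isCompact_stdSimplex ℝ F).image (Umap u).continuous_of_finiteDimensional
  have hCconv : Convex ℝ C := by
    intro x hx y hy a b ha hb hab
    intro i
    have h1 := hx i
    have h2 := hy i
    simp only [Pi.add_apply, Pi.smul_apply, smul_eq_mul]
    have h3 : a * V + b * V = V := by rw [← add_mul, hab, one_mul]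
    nlinarith [mul_le_mul_of_nonneg_left h1 ha, mul_le_mul_of_nonneg_left h2 hb]
  have hCclosed : IsClosed C := by
    have : C = ⋂ a : L, (fun x : L → ℝ => x a) ⁻¹' Set.Ici V := by
      ext x; simp [hC, Set.mem_iInter]
    rw [this]
    exact isClosed_iInter fun a => isClosed_Ici.preimage (continuous_apply a)
  have hdisj : Disjoint K C := by
    rw [Set.disjoint_left]
    rintro x ⟨q, hq, rfl⟩ hxC
    obtain ⟨a, ha⟩ := key q hq
    exact absurd (hxC a) (not_le.2 ha)
  obtain ⟨g, s, t, hgs, hst, hgt⟩ :=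
    geometric_hahn_banach_compact_closed hKconv hKcomp hCconv hCclosed hdisj
  set pv : L → ℝ := fun a => g (Pi.single a 1) with hpv
  have hrep : ∀ x : L → ℝ, g x = ∑ a : L, x a * pv a := by
    intro x
    have hx : x = ∑ a : L, x a • (Pi.single a 1 : L → ℝ) := by
      funext j
      simp [Finset.sum_apply, Pi.single_apply]
    conv_lhs => rw [hx]
    rw [map_sum]
    exact Finset.sum_congr rfl fun a _ => by rw [map_smul, smul_eq_mul]
  set cV : L → ℝ := fun _ => V with hcVdef
  have hcV : cV ∈ C := fun i => le_refl V
  have hgcV : g cV = V * ∑ a : L, pv a := by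
    rw [hrep, Finset.mul_sum]
  have hpv_nonneg : ∀ a, 0 ≤ pv a := by
    intro a
    by_contra h
    push_neg at h
    set e : L → ℝ := Pi.single a 1 with he
    have hge : g e = pv a := rfl
    have hmem : ∀ r : ℝ, 0 ≤ r → (cV + r • e) ∈ C := by
      intro r hr i
      have h1 : (0 : ℝ) ≤ e i := by
        rcases eq_or_ne i a with rfl | hne
        · simp [he]
        · simp [he, Pi.single_apply, hne]
      have h2 : (0 : ℝ) ≤ r * e i := mul_nonneg hr h1
      have h3 := hcV i
      simp only [hC, Set.mem_setOf_eq, Pi.add_apply, Pi.smul_apply, smul_eq_mul]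
      dsimp [cV] at h3 ⊢
      linarith
    set r : ℝ := max 0 ((t - g cV) / pv a + 1) with hrdef
    have hr0 : 0 ≤ r := le_max_left _ _
    have hrgt : (t - g cV) / pv a < r := lt_of_lt_of_le (lt_add_one _) (le_max_right _ _)
    have hCmem := hgt _ (hmem r hr0)
    have hg : g (cV + r • e) = g cV + r * pv a := by
      rw [map_add, map_smul, smul_eq_mul, hge]
    have hlt : r * pv a < t - g cV := (div_lt_iff_of_neg h).mp hrgt
    rw [hg] at hCmem
    linarith
  set σ : ℝ := ∑ a : L, pv a with hσdef
  have hσ0 : 0 ≤ σ := Finset.sum_nonneg fun a _ => hpv_nonneg a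
  obtain ⟨q0, hq0⟩ := simplex_nonempty F
  have hσ : 0 < σ := by
    rcases hσ0.lt_or_eq with h | h
    · exact h
    · exfalso
      have hzero : ∀ a : L, pv a = 0 := by
        intro a
        have := (Finset.sum_eq_zero_iff_of_nonneg
          (fun a _ => hpv_nonneg a)).mp h.symm
        exact this a (Finset.mem_univ a)
      have h1 : g (Umap u q0) < s := hgs _ ⟨q0, hq0, rfl⟩
      have h2 : t < g cV := hgt cV hcV
      rw [hrep] at h1 h2
      simp [hzero] at h1 h2
      linarith
  set ph : L → ℝ := fun a => pv a / σ with hph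
  have hphmem : ph ∈ stdSimplex ℝ L := by
    constructor
    · exact fun a => div_nonneg (hpv_nonneg a) hσ0
    · rw [← Finset.sum_div]
      exact div_self hσ.ne'
  have hbA : ∀ p ∈ stdSimplex ℝ L, BddAbove ((fun q => Eu u p q) '' stdSimplex ℝ F) := by
    intro p hp
    exact ⟨M, by rintro y ⟨q, hq, rfl⟩; exact Eu_le_of_le u M hM hp hq⟩
  have h1 : V ≤ sSup ((fun q => Eu u ph q) '' stdSimplex ℝ F) := by
    have hS0b : BddBelow
        ((fun p => sSup ((fun q => Eu u p q) '' stdSimplex ℝ F)) '' stdSimplex ℝ L) := by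
      refine ⟨m, ?_⟩
      rintro y ⟨p, hp, rfl⟩
      exact le_trans (le_Eu_of_le u m hm hp hq0) (le_csSup (hbA p hp) ⟨q0, hq0, rfl⟩)
    exact csInf_le hS0b ⟨ph, hphmem, rfl⟩
  have h2 : sSup ((fun q => Eu u ph q) '' stdSimplex ℝ F) ≤ s / σ := by
    refine csSup_le ⟨_, ⟨q0, hq0, rfl⟩⟩ ?_
    rintro y ⟨q, hq, rfl⟩
    show Eu u ph q ≤ s / σ
    have hcalc : Eu u ph q = g (Umap u q) / σ := by
      rw [Eu_eq_Umap, hrep, Finset.sum_div]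
      exact Finset.sum_congr rfl fun a _ => by
        dsimp [ph]; rw [div_mul_eq_mul_div, mul_comm]
    rw [hcalc]
    exact le_of_lt ((div_lt_div_iff_of_pos_right hσ).mpr (hgs _ ⟨q, hq, rfl⟩))
  have h3 : s / σ < V := by
    have h2' : t < g cV := hgt cV hcV
    rw [hgcV] at h2'
    rw [div_lt_iff₀ hσ]
    nlinarith
  linarith

/-- Multi-follower zero-sum setting (leader minimizes the sum of the followers'
utilities).  `br` is a tie-breaking rule assigning to each follower and each admissible
commitment set a maximin response.  The leader's optimal pessimistic ambiguous value
`W*` (infimum over admissible commitment sets of the worst-case total payoff) satisfies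
`∑_F V*_F ≤ W* ≤ V*`, where `V*_F` is the minimax value of follower `F`'s zero-sum game
and `V*` is the precise Stackelberg value (infimum over singleton commitments). -/
theorem stmt5 {L 𝓕 : Type} [Fintype L] [Nonempty L] [Fintype 𝓕]
    (AF : 𝓕 → Type) [∀ f, Fintype (AF f)] [∀ f, Nonempty (AF f)]
    (u : (f : 𝓕) → L → AF f → ℝ)
    (br : (f : 𝓕) → Set (L → ℝ) → (AF f → ℝ))
    (hbr : ∀ (f : 𝓕) (P : Set (L → ℝ)), P.Nonempty → P ⊆ stdSimplex ℝ L →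
      IsCompact P → Convex ℝ P →
      br f P ∈ stdSimplex ℝ (AF f) ∧
      ∀ q ∈ stdSimplex ℝ (AF f), worst (u f) P q ≤ worst (u f) P (br f P)) :
    (∑ f : 𝓕, sInf ((fun p => sSup ((fun q => Eu (u f) p q) '' stdSimplex ℝ (AF f)))
        '' stdSimplex ℝ L)) ≤
      sInf {w : ℝ | ∃ P : Set (L → ℝ), P.Nonempty ∧ P ⊆ stdSimplex ℝ L ∧
        IsCompact P ∧ Convex ℝ P ∧
        w = sSup ((fun p => ∑ f : 𝓕, Eu (u f) p (br f P)) '' P)} ∧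
    sInf {w : ℝ | ∃ P : Set (L → ℝ), P.Nonempty ∧ P ⊆ stdSimplex ℝ L ∧
        IsCompact P ∧ Convex ℝ P ∧
        w = sSup ((fun p => ∑ f : 𝓕, Eu (u f) p (br f P)) '' P)} ≤
      sInf ((fun p => ∑ f : 𝓕, Eu (u f) p (br f {p})) '' stdSimplex ℝ L) := by
  classical
  set mf : 𝓕 → ℝ := fun f =>
    Finset.univ.inf' Finset.univ_nonempty fun a =>
      Finset.univ.inf' Finset.univ_nonempty fun b => u f a b with hmfdef
  set Mf : 𝓕 → ℝ := fun f =>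
    Finset.univ.sup' Finset.univ_nonempty fun a =>
      Finset.univ.sup' Finset.univ_nonempty fun b => u f a b with hMfdef
  have hmf : ∀ f a b, mf f ≤ u f a b := fun f a b =>
    le_trans (Finset.inf'_le _ (Finset.mem_univ a)) (Finset.inf'_le _ (Finset.mem_univ b))
  have hMf : ∀ f a b, u f a b ≤ Mf f := fun f a b =>
    le_trans (Finset.le_sup' (u f a) (Finset.mem_univ b))
      (Finset.le_sup' (fun a => Finset.univ.sup' Finset.univ_nonempty fun b => u f a b)
        (Finset.mem_univ a))
  have hLne : (stdSimplex ℝ L).Nonempty := simplex_nonempty L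
  set S : Set ℝ := {w : ℝ | ∃ P : Set (L → ℝ), P.Nonempty ∧ P ⊆ stdSimplex ℝ L ∧
        IsCompact P ∧ Convex ℝ P ∧
        w = sSup ((fun p => ∑ f : 𝓕, Eu (u f) p (br f P)) '' P)} with hSdef
  have hS_ne : S.Nonempty :=
    ⟨_, ⟨stdSimplex ℝ L, hLne, subset_rfl, isCompact_stdSimplex ℝ L,
      convex_stdSimplex ℝ L, rfl⟩⟩
  -- bounded-above image lemma
  have hBA : ∀ P : Set (L → ℝ), P ⊆ stdSimplex ℝ L →
      (∀ f, br f P ∈ stdSimplex ℝ (AF f)) →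
      BddAbove ((fun p => ∑ f : 𝓕, Eu (u f) p (br f P)) '' P) := by
    intro P hPsub hbrP
    refine ⟨∑ f : 𝓕, Mf f, ?_⟩
    rintro y ⟨p, hp, rfl⟩
    exact Finset.sum_le_sum fun f _ => Eu_le_of_le _ _ (hMf f) (hPsub hp) (hbrP f)
  have hS_bdd : BddBelow S := by
    refine ⟨∑ f : 𝓕, mf f, ?_⟩
    rintro w ⟨P, hPne, hPsub, hPc, hPconv, rfl⟩
    obtain ⟨p0, hp0⟩ := hPne
    have hbrP : ∀ f, br f P ∈ stdSimplex ℝ (AF f) :=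
      fun f => (hbr f P ⟨p0, hp0⟩ hPsub hPc hPconv).1
    have h1 : ∑ f : 𝓕, mf f ≤ ∑ f : 𝓕, Eu (u f) p0 (br f P) :=
      Finset.sum_le_sum fun f _ => le_Eu_of_le _ _ (hmf f) (hPsub hp0) (hbrP f)
    exact le_trans h1 (le_csSup (hBA P hPsub hbrP) ⟨p0, hp0, rfl⟩)
  constructor
  · -- lower bound
    refine le_csInf hS_ne ?_
    rintro w ⟨P, hPne, hPsub, hPc, hPconv, rfl⟩
    obtain ⟨p0, hp0⟩ := hPne
    have hbrP : ∀ f, br f P ∈ stdSimplex ℝ (AF f) :=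
      fun f => (hbr f P ⟨p0, hp0⟩ hPsub hPc hPconv).1
    choose q hq1 hq2 using fun f => minimax (u f) (mf f) (Mf f) (hmf f) (hMf f)
    have hstep : ∀ f : 𝓕,
        sInf ((fun p => sSup ((fun q => Eu (u f) p q) '' stdSimplex ℝ (AF f)))
          '' stdSimplex ℝ L) ≤ Eu (u f) p0 (br f P) := by
      intro f
      have hw1 : sInf ((fun p => sSup ((fun q => Eu (u f) p q) '' stdSimplex ℝ (AF f)))
          '' stdSimplex ℝ L) ≤ worst (u f) P (q f) := by
        refine le_csInf ⟨_, ⟨p0, hp0, rfl⟩⟩ ?_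
        rintro y ⟨p, hp, rfl⟩
        exact hq2 f p (hPsub hp)
      have hw2 : worst (u f) P (q f) ≤ worst (u f) P (br f P) :=
        (hbr f P ⟨p0, hp0⟩ hPsub hPc hPconv).2 (q f) (hq1 f)
      have hw3 : worst (u f) P (br f P) ≤ Eu (u f) p0 (br f P) := by
        refine csInf_le ⟨mf f, ?_⟩ ⟨p0, hp0, rfl⟩
        rintro y ⟨p, hp, rfl⟩
        exact le_Eu_of_le _ _ (hmf f) (hPsub hp) (hbrP f)
      linarith
    calc (∑ f : 𝓕, sInf ((fun p => sSup ((fun q => Eu (u f) p q) '' stdSimplex ℝ (AF f)))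
          '' stdSimplex ℝ L))
        ≤ ∑ f : 𝓕, Eu (u f) p0 (br f P) := Finset.sum_le_sum fun f _ => hstep f
      _ ≤ sSup ((fun p => ∑ f : 𝓕, Eu (u f) p (br f P)) '' P) :=
          le_csSup (hBA P hPsub hbrP) ⟨p0, hp0, rfl⟩
  · -- upper bound
    refine csInf_le_csInf hS_bdd (hLne.image _) ?_
    rintro y ⟨p, hp, rfl⟩
    refine ⟨{p}, Set.singleton_nonempty p, by simpa using hp, isCompact_singleton,
      convex_singleton p, ?_⟩
    rw [Set.image_singleton, csSup_singleton]
end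

section
/- In a multi-follower game where each follower plays a zero-sum game against a minimizing leader, and the maximin strategy f_i of each follower against the fully ambiguous set Δ(A_L) makes the leader indifferent among all its actions (E_{a_F∼f_i}[u_i(a_L,a_F)] = E_{a_F∼f_i}[u_i(a_L',a_F)] for all a_L, a_L'), then committing to full ambiguity P_L = Δ(A_L) is optimal for the leader: it achieves payoff ∑_i maximin_i, and no commitment set P_L achieves a smaller pessimistic payoff. -/
/-!
If every pure leader action gives follower `i` the same payoff `v_i` against `q*_i`, so does every
leader mixture, and the worst case of `q*_i` against any commitment set is `v_i`. Hence `v_i` is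
the maximin value and committing to `Δ(A_L)` yields exactly `∑ v_i`. Against any other
commitment `P`, the maximin response to `P` does at least as well as `q*_i`, i.e. it gives
follower `i` at least `v_i` at every leader mixture in `P`.
-/

section Indifference

variable {L F : Type} [Fintype L] [Fintype F] (u : L → F → ℝ)

theorem continuous_Eu_left (q : F → ℝ) : Continuous fun p => Eu u p q := by
  unfold Eu
  fun_prop

theorem bddBelow_image_Eu_left {P : Set (L → ℝ)} (hP : P ⊆ stdSimplex ℝ L) (q : F → ℝ) :
    BddBelow ((fun p => Eu u p q) '' P) :=
  ((isCompact_stdSimplex ℝ L).bddBelow_image (continuous_Eu_left u q).continuousOn).mono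
    (Set.image_mono hP)

variable {u}

theorem worst_le_Eu {P : Set (L → ℝ)} (hP : P ⊆ stdSimplex ℝ L) (q : F → ℝ) {p : L → ℝ}
    (hp : p ∈ P) : worst u P q ≤ Eu u p q :=
  csInf_le (bddBelow_image_Eu_left u hP q) ⟨p, hp, rfl⟩

theorem Eu_eq_of_forall_sum_eq {p : L → ℝ} {q : F → ℝ} {v : ℝ} (hp : p ∈ stdSimplex ℝ L)
    (hq : ∀ a, ∑ b, q b * u a b = v) : Eu u p q = v := by
  calc Eu u p q = ∑ a, p a * ∑ b, q b * u a b := by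
        simp only [Eu, Finset.mul_sum, mul_assoc]
    _ = (∑ a, p a) * v := by simp only [hq, Finset.sum_mul]
    _ = v := by rw [hp.2, one_mul]

theorem worst_eq_of_forall_sum_eq {P : Set (L → ℝ)} (hPne : P.Nonempty)
    (hP : P ⊆ stdSimplex ℝ L) {q : F → ℝ} {v : ℝ} (hq : ∀ a, ∑ b, q b * u a b = v) :
    worst u P q = v := by
  have himage : (fun p => Eu u p q) '' P = {v} :=
    (Set.EqOn.image_eq fun p hp => Eu_eq_of_forall_sum_eq (hP hp) hq).trans
      (hPne.image_const v)
  rw [worst, himage, csInf_singleton]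

theorem le_Eu_of_isMaximin {P : Set (L → ℝ)} (hPne : P.Nonempty) (hP : P ⊆ stdSimplex ℝ L)
    {q₀ q : F → ℝ} {v : ℝ} (hq₀ : q₀ ∈ stdSimplex ℝ F) (hq₀v : ∀ a, ∑ b, q₀ b * u a b = v)
    (hq : ∀ q' ∈ stdSimplex ℝ F, worst u P q' ≤ worst u P q) {p : L → ℝ} (hp : p ∈ P) :
    v ≤ Eu u p q :=
  calc v = worst u P q₀ := (worst_eq_of_forall_sum_eq hPne hP hq₀v).symm
    _ ≤ worst u P q := hq q₀ hq₀
    _ ≤ Eu u p q := worst_le_Eu hP q hp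

theorem sSup_image_worst_eq_of_forall_sum_eq {P : Set (L → ℝ)} (hPne : P.Nonempty)
    (hP : P ⊆ stdSimplex ℝ L) {q₀ : F → ℝ} {v : ℝ} (hq₀ : q₀ ∈ stdSimplex ℝ F)
    (hq₀v : ∀ a, ∑ b, q₀ b * u a b = v)
    (hmax : ∀ q ∈ stdSimplex ℝ F, worst u P q ≤ worst u P q₀) :
    sSup ((fun q => worst u P q) '' stdSimplex ℝ F) = v := by
  rw [← worst_eq_of_forall_sum_eq hPne hP hq₀v]
  exact IsGreatest.csSup_eq ⟨⟨q₀, hq₀, rfl⟩, by rintro _ ⟨q, hq, rfl⟩; exact hmax q hq⟩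

end Indifference

theorem stmt6_general {L 𝓕 : Type} [Fintype L] [Nonempty L] [Fintype 𝓕]
    (AF : 𝓕 → Type) [∀ f, Fintype (AF f)]
    (u : (f : 𝓕) → L → AF f → ℝ)
    (br : (f : 𝓕) → Set (L → ℝ) → (AF f → ℝ))
    (hbr : ∀ (f : 𝓕) (P : Set (L → ℝ)), P.Nonempty → P ⊆ stdSimplex ℝ L →
      br f P ∈ stdSimplex ℝ (AF f) ∧
      ∀ q ∈ stdSimplex ℝ (AF f), worst (u f) P q ≤ worst (u f) P (br f P))
    (hindif : ∀ (f : 𝓕) (a a' : L),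
      ∑ b : AF f, br f (stdSimplex ℝ L) b * u f a b =
      ∑ b : AF f, br f (stdSimplex ℝ L) b * u f a' b) :
    sSup ((fun p => ∑ f : 𝓕, Eu (u f) p (br f (stdSimplex ℝ L))) '' stdSimplex ℝ L) =
      (∑ f : 𝓕, sSup ((fun q => worst (u f) (stdSimplex ℝ L) q)
        '' stdSimplex ℝ (AF f))) ∧
    ∀ P : Set (L → ℝ), P.Nonempty → P ⊆ stdSimplex ℝ L →
      sSup ((fun p => ∑ f : 𝓕, Eu (u f) p (br f (stdSimplex ℝ L))) '' stdSimplex ℝ L) ≤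
      sSup ((fun p => ∑ f : 𝓕, Eu (u f) p (br f P)) '' P) := by
  obtain ⟨a₀⟩ := ‹Nonempty L›
  set Δ := stdSimplex ℝ L
  have hΔ : Δ.Nonempty := by classical exact ⟨_, ite_eq_mem_stdSimplex ℝ a₀⟩
  set v : 𝓕 → ℝ := fun f => ∑ b, br f Δ b * u f a₀ b
  have hv : ∀ f a, ∑ b, br f Δ b * u f a b = v f := fun f a => hindif f a a₀
  have hpayoff : Set.EqOn (fun p => ∑ f, Eu (u f) p (br f Δ)) (fun _ => ∑ f, v f) Δ :=
    fun p hp => Finset.sum_congr rfl fun f _ => Eu_eq_of_forall_sum_eq hp (hv f)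
  have hfull : sSup ((fun p => ∑ f, Eu (u f) p (br f Δ)) '' Δ) = ∑ f, v f := by
    rw [hpayoff.image_eq, hΔ.image_const, csSup_singleton]
  refine ⟨?_, fun P hPne hP => ?_⟩
  · rw [hfull]
    exact Finset.sum_congr rfl fun f _ =>
      (sSup_image_worst_eq_of_forall_sum_eq hΔ le_rfl (hbr f Δ hΔ le_rfl).1 (hv f)
        (hbr f Δ hΔ le_rfl).2).symm
  · obtain ⟨p₀, hp₀⟩ := hPne
    have hbdd : BddAbove ((fun p => ∑ f, Eu (u f) p (br f P)) '' P) :=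
      ((isCompact_stdSimplex ℝ L).bddAbove_image (continuous_finsetSum _ fun f _ =>
        continuous_Eu_left (u f) (br f P)).continuousOn).mono (Set.image_mono hP)
    calc sSup ((fun p => ∑ f, Eu (u f) p (br f Δ)) '' Δ) = ∑ f, v f := hfull
      _ ≤ ∑ f, Eu (u f) p₀ (br f P) := Finset.sum_le_sum fun f _ =>
          le_Eu_of_isMaximin ⟨p₀, hp₀⟩ hP (hbr f Δ hΔ le_rfl).1 (hv f)
            (hbr f P ⟨p₀, hp₀⟩ hP).2 hp₀
      _ ≤ _ := le_csSup hbdd ⟨p₀, hp₀, rfl⟩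

/-- If every follower's maximin response to the fully ambiguous commitment `Δ(A_L)` makes
the (minimizing) leader indifferent among all of its pure actions, then full ambiguity is
optimal: its pessimistic payoff is `∑_i maximin_i`, and no other commitment set achieves
a smaller pessimistic payoff. -/
theorem stmt6 {L 𝓕 : Type} [Fintype L] [Nonempty L] [Fintype 𝓕]
    (AF : 𝓕 → Type) [∀ f, Fintype (AF f)] [∀ f, Nonempty (AF f)]
    (u : (f : 𝓕) → L → AF f → ℝ)
    (br : (f : 𝓕) → Set (L → ℝ) → (AF f → ℝ))
    (hbr : ∀ (f : 𝓕) (P : Set (L → ℝ)), P.Nonempty → P ⊆ stdSimplex ℝ L →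
      br f P ∈ stdSimplex ℝ (AF f) ∧
      ∀ q ∈ stdSimplex ℝ (AF f), worst (u f) P q ≤ worst (u f) P (br f P))
    (hindif : ∀ (f : 𝓕) (a a' : L),
      ∑ b : AF f, br f (stdSimplex ℝ L) b * u f a b =
      ∑ b : AF f, br f (stdSimplex ℝ L) b * u f a' b) :
    sSup ((fun p => ∑ f : 𝓕, Eu (u f) p (br f (stdSimplex ℝ L))) '' stdSimplex ℝ L) =
      (∑ f : 𝓕, sSup ((fun q => worst (u f) (stdSimplex ℝ L) q)
        '' stdSimplex ℝ (AF f))) ∧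
    ∀ P : Set (L → ℝ), P.Nonempty → P ⊆ stdSimplex ℝ L →
      sSup ((fun p => ∑ f : 𝓕, Eu (u f) p (br f (stdSimplex ℝ L))) '' stdSimplex ℝ L) ≤
      sSup ((fun p => ∑ f : 𝓕, Eu (u f) p (br f P)) '' P) :=
  stmt6_general AF u br hbr hindif
end

section
/- In the 2-leader-action setting with follower utilities U_A(p) = (1−p)u_A + p·v_A, suppose no leader action strictly dominates and the equal-slope set is empty. Let μ be the unique minimizer of p ↦ max_A U_A(p). If the commitment interval satisfies underline{p} ≤ overline{p} < μ, then the follower's maximin best response set to [underline{p}, overline{p}] equals the set of ordinary best responses BR(overline{p}) to the precise mixture overline{p}. -/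
/-!
Let `M` be the follower's best payoff against the precise mixture `hi`. An action attaining `M`
cannot have positive slope: it would then pay more than `M` at `μ > hi`, whereas `μ` minimises the
upper envelope. Hence every best response to `hi` is supported on decreasing actions, so its payoff
is decreasing in `p` and its worst case over `[lo, hi]` is attained at `hi`, where it equals `M`.
Conversely no mixture guarantees more than its payoff at `hi ∈ [lo, hi]`, which is at most `M`.
So both response sets are the mixtures whose payoff at `hi` equals `M`.
-/

/-- Follower utilities `U_A(p) = (1−p)·uv A + p·vv A` for a two-action leader. -/
noncomputable def Uaff {F : Type} (uv vv : F → ℝ) (A : F) (p : ℝ) : ℝ :=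
  (1 - p) * uv A + p * vv A

/-- Worst-case value of follower mixture `q` against the commitment set `S ⊆ [0,1]`. -/
noncomputable def Wint {F : Type} [Fintype F] (uv vv : F → ℝ) (S : Set ℝ) (q : F → ℝ) : ℝ :=
  sInf ((fun p => ∑ A : F, q A * Uaff uv vv A p) '' S)

open Set

lemma setOf_forall_le_eq_setOf_eq {α β : Type*} [PartialOrder β] {S : Set α} {f : α → β} {c : β}
    (hle : ∀ x ∈ S, f x ≤ c) (hc : ∃ x ∈ S, f x = c) :
    {x | x ∈ S ∧ ∀ y ∈ S, f y ≤ f x} = {x | x ∈ S ∧ f x = c} := by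
  obtain ⟨x₀, hx₀, hfx₀⟩ := hc
  ext x
  refine and_congr_right fun hx => ⟨fun hmax => ?_, fun hfx y hy => hfx ▸ hle y hy⟩
  exact le_antisymm (hle x hx) (hfx₀ ▸ hmax x₀ hx₀)

section Follower

variable {F : Type} (uv vv : F → ℝ)

lemma Uaff_sub_Uaff (A : F) (p p' : ℝ) :
    Uaff uv vv A p' - Uaff uv vv A p = (p' - p) * (vv A - uv A) := by
  unfold Uaff
  ring

lemma Uaff_strictMono {A : F} (h : uv A < vv A) : StrictMono (Uaff uv vv A) := fun p p' hpp' => by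
  have := Uaff_sub_Uaff uv vv A p p'
  nlinarith

lemma Uaff_antitone {A : F} (h : vv A ≤ uv A) : Antitone (Uaff uv vv A) := fun p p' hpp' => by
  have := Uaff_sub_Uaff uv vv A p' p
  nlinarith

variable [Fintype F]

noncomputable def maxUtil (p : ℝ) : ℝ :=
  sSup ((fun A => Uaff uv vv A p) '' univ)

lemma Uaff_le_maxUtil (A : F) (p : ℝ) : Uaff uv vv A p ≤ maxUtil uv vv p :=
  le_csSup ((toFinite _).bddAbove) ⟨A, mem_univ A, rfl⟩

lemma exists_Uaff_eq_maxUtil [Nonempty F] (p : ℝ) : ∃ A, Uaff uv vv A p = maxUtil uv vv p := by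
  obtain ⟨A, -, hA⟩ := (univ_nonempty.image (fun A => Uaff uv vv A p)).csSup_mem (toFinite _)
  exact ⟨A, hA⟩

lemma vv_lt_uv_of_Uaff_eq_maxUtil {A : F} (hslope : uv A ≠ vv A) {p μ : ℝ} (hpμ : p < μ)
    (hmax : maxUtil uv vv μ ≤ maxUtil uv vv p) (hA : Uaff uv vv A p = maxUtil uv vv p) :
    vv A < uv A := by
  by_contra! hle
  have := Uaff_strictMono uv vv (lt_of_le_of_ne hle hslope) hpμ
  linarith [Uaff_le_maxUtil uv vv A μ]

noncomputable def mixedUtil (q : F → ℝ) (p : ℝ) : ℝ :=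
  ∑ A, q A * Uaff uv vv A p

lemma mixedUtil_single [DecidableEq F] (A : F) : mixedUtil uv vv (Pi.single A 1) = Uaff uv vv A := by
  funext p
  simp [mixedUtil, Pi.single_apply]

lemma mixedUtil_le_maxUtil {q : F → ℝ} (hq : q ∈ stdSimplex ℝ F) (p : ℝ) :
    mixedUtil uv vv q p ≤ maxUtil uv vv p :=
  calc mixedUtil uv vv q p ≤ ∑ A, q A * maxUtil uv vv p :=
        Finset.sum_le_sum fun A _ => mul_le_mul_of_nonneg_left (Uaff_le_maxUtil uv vv A p) (hq.1 A)
    _ = maxUtil uv vv p := by rw [← Finset.sum_mul, hq.2, one_mul]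

lemma Uaff_eq_maxUtil_of_mixedUtil_eq {q : F → ℝ} (hq : q ∈ stdSimplex ℝ F) {p : ℝ}
    (h : mixedUtil uv vv q p = maxUtil uv vv p) {A : F} (hA : q A ≠ 0) :
    Uaff uv vv A p = maxUtil uv vv p := by
  have hgap : ∑ B, q B * (maxUtil uv vv p - Uaff uv vv B p) = 0 := by
    simp only [mul_sub, Finset.sum_sub_distrib, ← Finset.sum_mul, hq.2, one_mul]
    exact sub_eq_zero.2 h.symm
  have hterm := (Finset.sum_eq_zero_iff_of_nonneg fun B _ =>
    mul_nonneg (hq.1 B) (sub_nonneg.2 (Uaff_le_maxUtil uv vv B p))).1 hgap A (Finset.mem_univ A)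
  linarith [(mul_eq_zero.1 hterm).resolve_left hA]

lemma mixedUtil_antitone {q : F → ℝ} (hq : ∀ A, 0 ≤ q A) (h : ∀ A, q A ≠ 0 → vv A ≤ uv A) :
    Antitone (mixedUtil uv vv q) := fun p p' hpp' =>
  Finset.sum_le_sum fun A _ => by
    by_cases hA : q A = 0
    · simp [hA]
    · exact mul_le_mul_of_nonneg_left (Uaff_antitone uv vv (h A hA) hpp') (hq A)

lemma Wint_singleton (q : F → ℝ) (p : ℝ) : Wint uv vv {p} q = mixedUtil uv vv q p := by
  rw [Wint, image_singleton, csInf_singleton, mixedUtil]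

lemma Wint_Icc_le (q : F → ℝ) {a b c : ℝ} (hc : c ∈ Icc a b) :
    Wint uv vv (Icc a b) q ≤ mixedUtil uv vv q c :=
  ContinuousOn.sInf_image_Icc_le (by unfold Uaff; fun_prop) hc

lemma Wint_Icc_of_antitoneOn {q : F → ℝ} {a b : ℝ} (hab : a ≤ b)
    (h : AntitoneOn (mixedUtil uv vv q) (Icc a b)) :
    Wint uv vv (Icc a b) q = mixedUtil uv vv q b :=
  (h.map_isGreatest (isGreatest_Icc hab)).csInf_eq

end Follower

theorem stmt11_general {F : Type} [Fintype F] [Nonempty F]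
    (uv vv : F → ℝ) (hslope : ∀ A, uv A ≠ vv A)
    (μ : ℝ) (hμ : μ ∈ Set.Icc (0:ℝ) 1)
    (hmin : ∀ p ∈ Set.Icc (0:ℝ) 1, p ≠ μ →
      sSup ((fun A => Uaff uv vv A μ) '' Set.univ) <
      sSup ((fun A => Uaff uv vv A p) '' Set.univ))
    (lo hi : ℝ) (h0 : 0 ≤ lo) (hlh : lo ≤ hi) (hhi : hi < μ) :
    {q | q ∈ stdSimplex ℝ F ∧
        ∀ q' ∈ stdSimplex ℝ F, Wint uv vv (Set.Icc lo hi) q' ≤ Wint uv vv (Set.Icc lo hi) q} =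
    {q | q ∈ stdSimplex ℝ F ∧
        ∀ q' ∈ stdSimplex ℝ F, Wint uv vv {hi} q' ≤ Wint uv vv {hi} q} := by
  classical
  set M := maxUtil uv vv hi
  have hdec (A : F) (hA : Uaff uv vv A hi = M) : vv A < uv A :=
    vv_lt_uv_of_Uaff_eq_maxUtil uv vv (hslope A) hhi
      (hmin hi ⟨h0.trans hlh, hhi.le.trans hμ.2⟩ hhi.ne).le hA
  have hbest (q : F → ℝ) (hq : q ∈ stdSimplex ℝ F) (h : mixedUtil uv vv q hi = M) :
      Wint uv vv (Icc lo hi) q = M := by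
    have hanti := mixedUtil_antitone uv vv hq.1 fun A hA =>
      (hdec A (Uaff_eq_maxUtil_of_mixedUtil_eq uv vv hq h hA)).le
    rw [Wint_Icc_of_antitoneOn uv vv hlh (hanti.antitoneOn _), h]
  obtain ⟨A₀, hA₀⟩ := exists_Uaff_eq_maxUtil uv vv hi
  have hpure := single_mem_stdSimplex ℝ A₀
  have hpure_hi : mixedUtil uv vv (Pi.single A₀ 1) hi = M := by rw [mixedUtil_single, hA₀]
  simp only [Wint_singleton]
  rw [setOf_forall_le_eq_setOf_eq (c := M)
      (fun q hq => (Wint_Icc_le uv vv q ⟨hlh, le_rfl⟩).trans (mixedUtil_le_maxUtil uv vv hq hi))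
      ⟨_, hpure, hbest _ hpure hpure_hi⟩,
    setOf_forall_le_eq_setOf_eq (c := M) (fun q hq => mixedUtil_le_maxUtil uv vv hq hi)
      ⟨_, hpure, hpure_hi⟩]
  ext q
  refine and_congr_right fun hq => ⟨fun h => ?_, hbest q hq⟩
  exact le_antisymm (mixedUtil_le_maxUtil uv vv hq hi) (h ▸ Wint_Icc_le uv vv q ⟨hlh, le_rfl⟩)

/-- With no strictly dominating leader action, all slopes nonzero, and `μ` the unique
minimizer of `p ↦ max_A U_A(p)` on `[0,1]`: if the commitment interval lies strictly
below `μ`, then the follower's maximin best response set to the interval coincides with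
the set of (maximin) best responses to the precise upper endpoint. -/
theorem stmt11 {F : Type} [Fintype F] [Nonempty F]
    (uv vv : F → ℝ) (hslope : ∀ A, uv A ≠ vv A)
    (hneg : ∃ A, vv A < uv A) (hpos : ∃ A, uv A < vv A)
    (μ : ℝ) (hμ : μ ∈ Set.Icc (0:ℝ) 1)
    (hmin : ∀ p ∈ Set.Icc (0:ℝ) 1, p ≠ μ →
      sSup ((fun A => Uaff uv vv A μ) '' Set.univ) <
      sSup ((fun A => Uaff uv vv A p) '' Set.univ))
    (lo hi : ℝ) (h0 : 0 ≤ lo) (hlh : lo ≤ hi) (hhi : hi < μ) :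
    {q | q ∈ stdSimplex ℝ F ∧
        ∀ q' ∈ stdSimplex ℝ F, Wint uv vv (Set.Icc lo hi) q' ≤ Wint uv vv (Set.Icc lo hi) q} =
    {q | q ∈ stdSimplex ℝ F ∧
        ∀ q' ∈ stdSimplex ℝ F, Wint uv vv {hi} q' ≤ Wint uv vv {hi} q} :=
  stmt11_general uv vv hslope μ hμ hmin lo hi h0 hlh hhi
end

section
/- Consider the Parasol-Umbrella game: leader has actions {0,1} and minimizes the sum of two followers' payoffs; follower 1's payoffs are (4,2;0,2) and follower 2's are (2,0;2,5) (rows indexed by leader actions 0,1; columns by the follower's two actions). For every precise commitment p ∈ [0,1], the sum of the two followers' best-response payoffs (with follower-favorable tie-breaking when indifferent choosing any best response) is at least 4, with strict inequality unless the followers choose the leader-favorable actions at the indifference points; whereas the fully ambiguous commitment Δ({0,1}) yields worst-case total payoff exactly 4. Hence the fully ambiguous commitment weakly dominates every precise commitment for the minimizing leader. -/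
/-!
Follower 1's second action and follower 2's first action each pay `2` whatever the leader
commits to. A best response is at least as good as these safe actions, so against any precise
commitment the followers collect at least `4`. Against full ambiguity the safe actions are
maximin: any mixture can be pushed down to at most `2` by the extreme commitment `p = 1`
(follower 1) or `p = 0` (follower 2). Playing them, the followers get exactly `4`.
-/

open Set

/-- Follower 1's payoff matrix in the Parasol-Umbrella game (rows = leader actions). -/
noncomputable def PU1 : Fin 2 → Fin 2 → ℝ := ![![4, 2], ![0, 2]]

/-- Follower 2's payoff matrix in the Parasol-Umbrella game (rows = leader actions). -/
noncomputable def PU2 : Fin 2 → Fin 2 → ℝ := ![![2, 0], ![2, 5]]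

/-- Expected payoff of follower action `b` against leader mixture `p` (prob. of action 1). -/
noncomputable def Epay (M : Fin 2 → Fin 2 → ℝ) (p : ℝ) (b : Fin 2) : ℝ :=
  (1 - p) * M 0 b + p * M 1 b

theorem continuous_epay (M : Fin 2 → Fin 2 → ℝ) (b : Fin 2) :
    Continuous fun p => Epay M p b := by
  unfold Epay
  fun_prop

section Maximin

variable {M : Fin 2 → Fin 2 → ℝ}

theorem mixed_epay_le_of_forall_epay_le {p : ℝ} {v : ℝ} (hv : ∀ b, Epay M p b ≤ v)
    {q : Fin 2 → ℝ} (hq : q ∈ stdSimplex ℝ (Fin 2)) :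
    q 0 * Epay M p 0 + q 1 * Epay M p 1 ≤ v := by
  have hsum : q 0 + q 1 = 1 := by simpa [Fin.sum_univ_two] using hq.2
  calc q 0 * Epay M p 0 + q 1 * Epay M p 1 ≤ q 0 * v + q 1 * v := by
        gcongr
        exacts [hq.1 0, hv 0, hq.1 1, hv 1]
    _ = v := by rw [← add_mul, hsum, one_mul]

theorem sInf_mixed_epay_le_of_epay_eq {b₀ : Fin 2} {v : ℝ} (hconst : ∀ p, Epay M p b₀ = v)
    {p₀ : ℝ} (hp₀ : p₀ ∈ Icc (0 : ℝ) 1) (hpunish : ∀ b, Epay M p₀ b ≤ v)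
    {q : Fin 2 → ℝ} (hq : q ∈ stdSimplex ℝ (Fin 2)) :
    sInf ((fun p => q 0 * Epay M p 0 + q 1 * Epay M p 1) '' Icc (0 : ℝ) 1) ≤
      sInf ((fun p => Epay M p b₀) '' Icc (0 : ℝ) 1) := by
  have hmixed : Continuous fun p => q 0 * Epay M p 0 + q 1 * Epay M p 1 := by
    have := continuous_epay M 0
    have := continuous_epay M 1
    fun_prop
  simp_rw [hconst]
  rw [(nonempty_Icc.2 zero_le_one).image_const, csInf_singleton]
  calc sInf ((fun p => q 0 * Epay M p 0 + q 1 * Epay M p 1) '' Icc (0 : ℝ) 1)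
      ≤ q 0 * Epay M p₀ 0 + q 1 * Epay M p₀ 1 :=
        csInf_le (isCompact_Icc.bddBelow_image hmixed.continuousOn) (mem_image_of_mem _ hp₀)
    _ ≤ v := mixed_epay_le_of_forall_epay_le hpunish hq

end Maximin

theorem epay_PU1_one (p : ℝ) : Epay PU1 p 1 = 2 := by
  simp [Epay, PU1]
  ring

theorem epay_PU2_zero (p : ℝ) : Epay PU2 p 0 = 2 := by
  simp [Epay, PU2]
  ring

theorem epay_PU1_at_one_le (b : Fin 2) : Epay PU1 1 b ≤ 2 := by
  fin_cases b <;> norm_num [Epay, PU1]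

theorem epay_PU2_at_zero_le (b : Fin 2) : Epay PU2 0 b ≤ 2 := by
  fin_cases b <;> norm_num [Epay, PU2]

/-- Parasol-Umbrella game: for every precise commitment `p ∈ [0,1]` and any best responses
of the two followers, the minimizing leader's payoff (sum of follower payoffs) is at least
`4`; follower 1's second action and follower 2's first action are maximin responses to the
fully ambiguous commitment `[0,1]`; and the fully ambiguous commitment yields worst-case
total payoff exactly `4`.  Hence full ambiguity weakly dominates every precise commitment. -/
theorem stmt12 :
    (∀ p ∈ Set.Icc (0:ℝ) 1, ∀ b c : Fin 2,
      (∀ b' : Fin 2, Epay PU1 p b' ≤ Epay PU1 p b) →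
      (∀ c' : Fin 2, Epay PU2 p c' ≤ Epay PU2 p c) →
      4 ≤ Epay PU1 p b + Epay PU2 p c) ∧
    (∀ q ∈ stdSimplex ℝ (Fin 2),
      sInf ((fun p => q 0 * Epay PU1 p 0 + q 1 * Epay PU1 p 1) '' Set.Icc (0:ℝ) 1) ≤
      sInf ((fun p => Epay PU1 p 1) '' Set.Icc (0:ℝ) 1)) ∧
    (∀ q ∈ stdSimplex ℝ (Fin 2),
      sInf ((fun p => q 0 * Epay PU2 p 0 + q 1 * Epay PU2 p 1) '' Set.Icc (0:ℝ) 1) ≤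
      sInf ((fun p => Epay PU2 p 0) '' Set.Icc (0:ℝ) 1)) ∧
    sSup ((fun p => Epay PU1 p 1 + Epay PU2 p 0) '' Set.Icc (0:ℝ) 1) = 4 := by
  refine ⟨fun p _ b c hb hc => ?_,
    fun q hq => sInf_mixed_epay_le_of_epay_eq epay_PU1_one (right_mem_Icc.2 zero_le_one)
      epay_PU1_at_one_le hq,
    fun q hq => sInf_mixed_epay_le_of_epay_eq epay_PU2_zero (left_mem_Icc.2 zero_le_one)
      epay_PU2_at_zero_le hq, ?_⟩
  · linarith [hb 1, hc 0, epay_PU1_one p, epay_PU2_zero p]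
  · simp_rw [epay_PU1_one, epay_PU2_zero]
    rw [(nonempty_Icc.2 zero_le_one).image_const, csSup_singleton]
    norm_num
end

section
/- There exists a 2×2 single-follower game with follower payoff matrix (columns A, B; rows are the leader's worst-case scenarios) equal to (1,0;0,δ) for δ > 0, and a finite leader commitment set P_L = {0, 1/(1+δ)} ⊆ [0,1] (probabilities of the second row) such that the follower's maximin response to P_L is the pure strategy A; but for the shifted set P_L + ε = {ε, 1/(1+δ) + ε} with any sufficiently small ε > 0, the follower's unique maximin response is the mixture (1/(1+δ))·A + (δ/(1+δ))·B. Hence the maximin best response map is not continuous (in total variation) with respect to perturbations of the commitment set, with discontinuity magnitude δ/(1+δ) independent of ε. -/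
/-!
For a mixed response `q`, the payoff `q 0 (1 - p) + q 1 δ p` is affine in `p` and pivots about
the kink `p = 1/(1+δ)`, where every response earns `δ/(1+δ)`; its slope is proportional to
`q 1 - 1/(1+δ)`. A commitment set lying on both sides of the kink therefore pushes every response
with nonzero slope strictly below `δ/(1+δ)`, so the flat response is the unique maximin one. The
set `{0, 1/(1+δ)}` only touches the kink from the right, so a response with positive slope, such as
pure `A`, is not penalised; shifting the set by any `ε > 0` puts both points on opposite sides.
-/

lemma sInf_image_pair {α β : Type*} [ConditionallyCompleteLinearOrder β] (f : α → β) (x y : α) :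
    sInf (f '' {x, y}) = min (f x) (f y) := by
  rw [Set.image_pair, csInf_pair]

lemma stdSimplex_fin_two_sum {q : Fin 2 → ℝ} (hq : q ∈ stdSimplex ℝ (Fin 2)) : q 0 + q 1 = 1 := by
  simpa [Fin.sum_univ_two] using hq.2

lemma stdSimplex_fin_two_ext {q q' : Fin 2 → ℝ} (hq : q ∈ stdSimplex ℝ (Fin 2))
    (hq' : q' ∈ stdSimplex ℝ (Fin 2)) (h : q 1 = q' 1) : q = q' := by
  have := stdSimplex_fin_two_sum hq
  have := stdSimplex_fin_two_sum hq'
  ext i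
  fin_cases i
  · simp only [Fin.zero_eta]; linarith
  · exact h

namespace MaximinDiscontinuity

variable (δ : ℝ)

def payoff (q : Fin 2 → ℝ) (p : ℝ) : ℝ := q 0 * (1 - p) + q 1 * (δ * p)

variable {δ}

lemma payoff_zero (q : Fin 2 → ℝ) : payoff δ q 0 = q 0 := by
  simp [payoff]

lemma payoff_eq_kink_add (hδ : 1 + δ ≠ 0) {q : Fin 2 → ℝ} (hq : q 0 + q 1 = 1) (p : ℝ) :
    payoff δ q p = δ / (1 + δ) + (q 1 - 1 / (1 + δ)) * ((1 + δ) * p - 1) := by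
  rw [payoff, show q 0 = 1 - q 1 by linarith]
  field_simp
  ring

lemma payoff_kink (hδ : 1 + δ ≠ 0) {q : Fin 2 → ℝ} (hq : q 0 + q 1 = 1) :
    payoff δ q (1 / (1 + δ)) = δ / (1 + δ) := by
  rw [payoff_eq_kink_add hδ hq]
  field_simp
  ring

lemma payoff_of_flat (hδ : 1 + δ ≠ 0) {q : Fin 2 → ℝ} (hq : q 0 + q 1 = 1)
    (hflat : q 1 = 1 / (1 + δ)) (p : ℝ) : payoff δ q p = δ / (1 + δ) := by
  rw [payoff_eq_kink_add hδ hq, hflat, sub_self, zero_mul, add_zero]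

lemma min_payoff_le (hδ : 1 + δ ≠ 0) {q : Fin 2 → ℝ} (hq : q 0 + q 1 = 1) {p₁ p₂ : ℝ}
    (h₁ : (1 + δ) * p₁ ≤ 1) (h₂ : 1 ≤ (1 + δ) * p₂) :
    min (payoff δ q p₁) (payoff δ q p₂) ≤ δ / (1 + δ) := by
  rw [payoff_eq_kink_add hδ hq, payoff_eq_kink_add hδ hq]
  rcases le_total 0 (q 1 - 1 / (1 + δ)) with hslope | hslope
  · exact (min_le_left _ _).trans
      (add_le_of_nonpos_right (mul_nonpos_of_nonneg_of_nonpos hslope (by linarith)))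
  · exact (min_le_right _ _).trans
      (add_le_of_nonpos_right (mul_nonpos_of_nonpos_of_nonneg hslope (by linarith)))

lemma min_payoff_lt (hδ : 1 + δ ≠ 0) {q : Fin 2 → ℝ} (hq : q 0 + q 1 = 1) {p₁ p₂ : ℝ}
    (h₁ : (1 + δ) * p₁ < 1) (h₂ : 1 < (1 + δ) * p₂) (hq₁ : q 1 ≠ 1 / (1 + δ)) :
    min (payoff δ q p₁) (payoff δ q p₂) < δ / (1 + δ) := by
  rw [payoff_eq_kink_add hδ hq, payoff_eq_kink_add hδ hq]
  rcases (sub_ne_zero.mpr hq₁).lt_or_gt with hslope | hslope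
  · exact (min_le_right _ _).trans_lt
      (add_lt_of_neg_right _ (mul_neg_of_neg_of_pos hslope (by linarith)))
  · exact (min_le_left _ _).trans_lt
      (add_lt_of_neg_right _ (mul_neg_of_pos_of_neg hslope (by linarith)))

end MaximinDiscontinuity

open MaximinDiscontinuity in
/-- Discontinuity of the maximin best-response map.  There is a 2×2 single-follower game
with follower column payoffs `U_A(p) = 1−p`, `U_B(p) = δp` (`δ > 0`, `p` = probability of
the leader's second row) and commitment set `P = {0, 1/(1+δ)}` such that pure `A` is a
maximin response to `P`, while for every sufficiently small `ε > 0` the shifted set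
`P + ε = {ε, 1/(1+δ)+ε}` has the mixture `(1/(1+δ))·A + (δ/(1+δ))·B` as its unique
maximin response — a jump of total-variation magnitude `δ/(1+δ)` independent of `ε`. -/
theorem stmt17 :
    ∃ δ : ℝ, 0 < δ ∧ ∃ ε₀ : ℝ, 0 < ε₀ ∧
    let val : (Fin 2 → ℝ) → ℝ → ℝ := fun q p => q 0 * (1 - p) + q 1 * (δ * p)
    let w : (Fin 2 → ℝ) → Set ℝ → ℝ := fun q P => sInf ((val q) '' P)
    let pureA : Fin 2 → ℝ := fun t => if t = 0 then 1 else 0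
    let mixAB : Fin 2 → ℝ := fun t => if t = 0 then 1 / (1 + δ) else δ / (1 + δ)
    (∀ q ∈ stdSimplex ℝ (Fin 2),
      w q {0, 1 / (1 + δ)} ≤ w pureA {0, 1 / (1 + δ)}) ∧
    (∀ ε : ℝ, 0 < ε → ε < ε₀ →
      (∀ q ∈ stdSimplex ℝ (Fin 2),
        w q {ε, 1 / (1 + δ) + ε} ≤ w mixAB {ε, 1 / (1 + δ) + ε} ∧
        (q ≠ mixAB → w q {ε, 1 / (1 + δ) + ε} < w mixAB {ε, 1 / (1 + δ) + ε}))) ∧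
    (∀ t : Fin 2, |pureA t - mixAB t| ≤ δ / (1 + δ)) ∧
    (∃ t : Fin 2, |pureA t - mixAB t| = δ / (1 + δ)) := by
  -- the flat response `q 1 = 1/(1+δ)` is `mixAB` only for `δ = 1`
  refine ⟨1, one_pos, 1 / (1 + 1), by norm_num, ?_⟩
  intro val w pureA mixAB
  have hδ : (1 : ℝ) + 1 ≠ 0 := by norm_num
  have hw (q : Fin 2 → ℝ) (x y : ℝ) : w q {x, y} = min (payoff 1 q x) (payoff 1 q y) :=
    sInf_image_pair _ x y
  have hmix : mixAB ∈ stdSimplex ℝ (Fin 2) := ⟨fun t => by fin_cases t <;> norm_num [mixAB],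
    by norm_num [Fin.sum_univ_two, mixAB]⟩
  have hmix_flat : mixAB 1 = 1 / (1 + 1) := by norm_num [mixAB]
  have hw_mix (x y : ℝ) : w mixAB {x, y} = 1 / (1 + 1) := by
    rw [hw, payoff_of_flat hδ (stdSimplex_fin_two_sum hmix) hmix_flat,
      payoff_of_flat hδ (stdSimplex_fin_two_sum hmix) hmix_flat, min_self]
  refine ⟨fun q hq => ?_, fun ε hε hε₀ q hq => ⟨?_, fun hne => ?_⟩, fun t => ?_, ⟨0, ?_⟩⟩
  · have hA : w pureA {0, 1 / (1 + 1)} = 1 / (1 + 1) := by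
      rw [hw, payoff_zero, payoff_kink hδ (by norm_num [pureA])]
      norm_num [pureA]
    rw [hA, hw]
    exact min_payoff_le hδ (stdSimplex_fin_two_sum hq) (by norm_num) (by norm_num)
  · rw [hw_mix, hw]
    exact min_payoff_le hδ (stdSimplex_fin_two_sum hq) (by linarith) (by linarith)
  · rw [hw_mix, hw]
    refine min_payoff_lt hδ (stdSimplex_fin_two_sum hq) (by linarith) (by linarith) ?_
    exact fun h => hne (stdSimplex_fin_two_ext hq hmix (h.trans hmix_flat.symm))
  · fin_cases t <;> norm_num [pureA, mixAB, abs_le]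
  · norm_num [pureA, mixAB]
end

section
/- Let the leader have k actions and define a single follower with action set equal to the nonempty subsets J ⊆ [k], with payoffs u_F(J,i) = 1/|J| + |J|ε if i ∈ J and 0 otherwise, where 0 < ε < 1/(k(k−1)). Then for every nonempty pure ambiguous commitment M ⊆ [k] (the set of point masses on actions in M), the follower's unique maximin best response is the pure action M, achieving maximin value 1/|M| + |M|ε. -/
open scoped Classical

lemma aux18 {a j n k : ℕ} {ε : ℝ} (hε0 : 0 < ε)
    (hkk : ε * ((k:ℝ) * ((k:ℝ) - 1)) < 1)
    (hj1 : 1 ≤ j) (hn1 : 1 ≤ n) (hjk : j ≤ k) (hnk : n ≤ k)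
    (han : a ≤ n)
    (hcase : a < j ∨ (a = j ∧ j < n)) :
    (a : ℝ) * (1 / (j:ℝ) + (j:ℝ) * ε) < (n : ℝ) * (1 / (n:ℝ) + (n:ℝ) * ε) := by
  have hj0 : (0:ℝ) < j := by exact_mod_cast hj1
  have hn0 : (0:ℝ) < n := by exact_mod_cast hn1
  have hrhs : (n:ℝ) * (1 / (n:ℝ) + (n:ℝ) * ε) = 1 + (n:ℝ)^2 * ε := by
    field_simp
  rw [hrhs]
  rcases hcase with haj | ⟨heq, hjn⟩
  · -- a < j
    have ha1 : (a:ℝ) + 1 ≤ (j:ℝ) := by exact_mod_cast haj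
    have hanR : (a:ℝ) ≤ (n:ℝ) := by exact_mod_cast han
    have ha0 : (0:ℝ) ≤ a := by positivity
    have key : (a:ℝ) + (a:ℝ)*(j:ℝ)^2*ε < (j:ℝ) * (1 + (n:ℝ)^2 * ε) := by
      rcases le_or_gt j n with hjn | hnj
      · have hjnR : (j:ℝ) ≤ (n:ℝ) := by exact_mod_cast hjn
        have h1 : (a:ℝ)*(j:ℝ) ≤ (n:ℝ)*(n:ℝ) := mul_le_mul hanR hjnR hj0.le hn0.le
        nlinarith [mul_le_mul_of_nonneg_right (mul_le_mul_of_nonneg_right h1 hj0.le) hε0.le]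
      · have hnjR : (n:ℝ) + 1 ≤ (j:ℝ) := by exact_mod_cast hnj
        have hjkR : (j:ℝ) ≤ (k:ℝ) := by exact_mod_cast hjk
        have hnk1 : (n:ℝ) ≤ (k:ℝ) - 1 := by linarith
        have hnjle : (n:ℝ)*(j:ℝ) ≤ ((k:ℝ)-1)*(k:ℝ) :=
          mul_le_mul hnk1 hjkR hj0.le (by linarith)
        have h2 : ε * ((n:ℝ)*(j:ℝ)) < 1 := by
          calc ε * ((n:ℝ)*(j:ℝ)) ≤ ε * ((k:ℝ)*((k:ℝ)-1)) := by
                apply mul_le_mul_of_nonneg_left (by linarith) hε0.le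
            _ < 1 := hkk
        have h3 : ε * ((n:ℝ)*(j:ℝ)) * ((j:ℝ)-(n:ℝ)) < 1 * ((j:ℝ)-(n:ℝ)) :=
          mul_lt_mul_of_pos_right h2 (by linarith)
        nlinarith [mul_le_mul_of_nonneg_right hanR (by positivity : (0:ℝ) ≤ 1 + (j:ℝ)^2*ε)]
    have hlhs : (a:ℝ) * (1 / (j:ℝ) + (j:ℝ) * ε) = ((a:ℝ) + (a:ℝ)*(j:ℝ)^2*ε) / (j:ℝ) := by
      field_simp
    rw [hlhs, div_lt_iff₀ hj0]
    linarith [key]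
  · -- a = j < n
    subst heq
    have hlt : (a:ℝ) < (n:ℝ) := by exact_mod_cast hjn
    have ha0 : (0:ℝ) < a := by exact_mod_cast hj1
    have : (a:ℝ) * (1 / (a:ℝ) + (a:ℝ) * ε) = 1 + (a:ℝ)^2 * ε := by field_simp
    rw [this]
    nlinarith [mul_lt_mul_of_pos_right (mul_lt_mul hlt hlt.le ha0 hn0.le) hε0]

open scoped Classical

/-- Subset game: the leader has `k` actions and the single follower's actions are the
nonempty subsets `J ⊆ [k]`, with payoff `1/|J| + |J|·ε` against leader actions in `J` and
`0` otherwise, where `0 < ε < 1/(k(k−1))`.  For every nonempty pure ambiguous commitment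
`M ⊆ [k]`, the follower's unique maximin best response is the pure action `M`, with
maximin value `1/|M| + |M|·ε`. -/
theorem stmt18 {k : ℕ} (ε : ℝ) (hε0 : 0 < ε)
    (hε : ε < 1 / ((k : ℝ) * ((k : ℝ) - 1)))
    (M : Finset (Fin k)) (hM : M.Nonempty) :
    let A := {J : Finset (Fin k) // J.Nonempty}
    let u : A → Fin k → ℝ :=
      fun J i => if i ∈ J.1 then 1 / (J.1.card : ℝ) + (J.1.card : ℝ) * ε else 0
    let pureM : A → ℝ := fun J => if J.1 = M then 1 else 0
    let w : (A → ℝ) → ℝ := fun q => sInf ((fun m => ∑ J : A, q J * u J m) '' ↑M)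
    w pureM = 1 / (M.card : ℝ) + (M.card : ℝ) * ε ∧
    ∀ q ∈ stdSimplex ℝ A, q ≠ pureM → w q < w pureM := by
  intro A u pureM w
  set M0 : A := ⟨M, hM⟩ with hM0
  set c : ℝ := 1 / (M.card : ℝ) + (M.card : ℝ) * ε with hc
  -- k ≥ 1 and hkk
  have hk1 : 1 ≤ k := by
    rcases hM with ⟨x, _⟩; exact Nat.one_le_iff_ne_zero.mpr (by rintro rfl; exact x.elim0)
  have hkk : ε * ((k:ℝ) * ((k:ℝ) - 1)) < 1 := by
    rcases Nat.lt_or_ge k 2 with hk | hk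
    · exfalso
      have hkeq : k = 1 := by omega
      rw [hkeq] at hε
      norm_num at hε
      linarith
    · have hkpos : (0:ℝ) < (k:ℝ) * ((k:ℝ) - 1) := by
        have : (2:ℝ) ≤ (k:ℝ) := by exact_mod_cast hk
        nlinarith
      rw [lt_div_iff₀ hkpos] at hε
      linarith
  have hn1 : 1 ≤ M.card := hM.card_pos
  have hnk : M.card ≤ k := by
    simpa using M.card_le_univ.trans_eq (by simp)
  -- value of pure M against each m ∈ M
  have hval : ∀ m ∈ M, ∑ J : A, pureM J * u J m = c := by
    intro m hm
    have hsum : ∑ J : A, pureM J * u J m = u M0 m := by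
      rw [Finset.sum_eq_single M0]
      · simp [pureM, hM0]
      · intro J _ hJ
        have hne : J.1 ≠ M := fun h => hJ (Subtype.ext h)
        simp [pureM, hne]
      · intro h; exact absurd (Finset.mem_univ _) h
    rw [hsum]
    simp [u, hM0, hm, hc]
  -- image under pureM is a singleton
  have himg : (fun m => ∑ J : A, pureM J * u J m) '' ↑M = {c} := by
    ext x
    simp only [Set.mem_image, Set.mem_singleton_iff, Finset.mem_coe]
    constructor
    · rintro ⟨m, hm, rfl⟩; exact hval m hm
    · rintro rfl; exact ⟨hM.choose, hM.choose_spec, hval _ hM.choose_spec⟩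
  have hwpure : w pureM = c := by
    show sInf ((fun m => ∑ J : A, pureM J * u J m) '' ↑M) = c
    rw [himg, csInf_singleton]
  refine ⟨hwpure, ?_⟩
  intro q hq hqne
  rw [hwpure]
  -- row sums
  have hrow : ∀ J : A, ∑ m ∈ M, u J m = ((M ∩ J.1).card : ℝ) * (1 / (J.1.card : ℝ) + (J.1.card : ℝ) * ε) := by
    intro J
    have : ∑ m ∈ M, u J m = ∑ m ∈ M ∩ J.1, (1 / (J.1.card : ℝ) + (J.1.card : ℝ) * ε) := by
      rw [← Finset.sum_ite_mem]
    rw [this, Finset.sum_const, nsmul_eq_mul]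
  have hrowM : ∑ m ∈ M, u M0 m = (M.card : ℝ) * c := by
    rw [hrow]; simp [hM0, hc]
  have hrowlt : ∀ J : A, J ≠ M0 → ∑ m ∈ M, u J m < (M.card : ℝ) * c := by
    intro J hJ
    rw [hrow, hc]
    have hj1 : 1 ≤ J.1.card := J.2.card_pos
    have hjk : J.1.card ≤ k := by simpa using J.1.card_le_univ.trans_eq (by simp)
    have han : (M ∩ J.1).card ≤ M.card := Finset.card_le_card Finset.inter_subset_left
    have haj : (M ∩ J.1).card ≤ J.1.card := Finset.card_le_card Finset.inter_subset_right
    have hJM : J.1 ≠ M := fun h => hJ (Subtype.ext h)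
    have hcase : (M ∩ J.1).card < J.1.card ∨ ((M ∩ J.1).card = J.1.card ∧ J.1.card < M.card) := by
      rcases lt_or_eq_of_le haj with h | h
      · exact Or.inl h
      · refine Or.inr ⟨h, ?_⟩
        have hsub : J.1 ⊆ M := by
          have := Finset.eq_of_subset_of_card_le Finset.inter_subset_right (le_of_eq h.symm)
          exact Finset.inter_eq_right.mp this
        exact Finset.card_lt_card (hsub.ssubset_of_ne hJM)
    exact aux18 hε0 hkk hj1 hn1 hjk hnk han hcase
  have hrowle : ∀ J : A, ∑ m ∈ M, u J m ≤ (M.card : ℝ) * c := by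
    intro J
    by_cases hJ : J = M0
    · rw [hJ, hrowM]
    · exact (hrowlt J hJ).le
  -- there is a J0 ≠ M0 with positive mass
  have hq0 : ∀ J, 0 ≤ q J := hq.1
  have hq1 : ∑ J : A, q J = 1 := hq.2
  have hex : ∃ J0 : A, J0 ≠ M0 ∧ 0 < q J0 := by
    by_contra h
    push_neg at h
    apply hqne
    have hz : ∀ J : A, J ≠ M0 → q J = 0 := fun J hJ => le_antisymm (h J hJ) (hq0 J)
    have hqM0 : q M0 = 1 := by
      rw [← hq1, Finset.sum_eq_single M0]
      · intro J _ hJ; exact hz J hJ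
      · intro h'; exact absurd (Finset.mem_univ _) h'
    funext J
    by_cases hJ : J = M0
    · rw [hJ, hqM0]; simp [pureM, hM0]
    · rw [hz J hJ]
      have hne : J.1 ≠ M := fun h' => hJ (Subtype.ext h')
      simp [pureM, hne]
  obtain ⟨J0, hJ0ne, hJ0pos⟩ := hex
  -- averaging
  have hswap : ∑ m ∈ M, ∑ J : A, q J * u J m = ∑ J : A, q J * ∑ m ∈ M, u J m := by
    rw [Finset.sum_comm]
    simp_rw [Finset.mul_sum]
  have hlt : ∑ J : A, q J * ∑ m ∈ M, u J m < ∑ J : A, q J * ((M.card : ℝ) * c) := by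
    apply Finset.sum_lt_sum
    · intro J _
      exact mul_le_mul_of_nonneg_left (hrowle J) (hq0 J)
    · exact ⟨J0, Finset.mem_univ _, mul_lt_mul_of_pos_left (hrowlt J0 hJ0ne) hJ0pos⟩
  have hconst : ∑ J : A, q J * ((M.card : ℝ) * c) = ∑ m ∈ M, c := by
    rw [← Finset.sum_mul, hq1, one_mul, Finset.sum_const, nsmul_eq_mul]
  have htotal : ∑ m ∈ M, ∑ J : A, q J * u J m < ∑ m ∈ M, c := by
    rw [hswap, ← hconst]; exact hlt
  obtain ⟨m0, hm0, hm0lt⟩ := Finset.exists_lt_of_sum_lt htotal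
  have hbdd : BddBelow ((fun m => ∑ J : A, q J * u J m) '' ↑M) :=
    (M.finite_toSet.image _).bddBelow
  have hmem : (∑ J : A, q J * u J m0) ∈ (fun m => ∑ J : A, q J * u J m) '' ↑M :=
    ⟨m0, hm0, rfl⟩
  exact lt_of_le_of_lt (csInf_le hbdd hmem) hm0lt
end
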